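/- arXiv:1608.00554 — 2 statements merged into one kernel-verified Lean document; each statement's English description precedes it below -/
import Mathlib

section
/- Let L be an m×m positive semidefinite real matrix with Cholesky decomposition L = V Vᵀ where V is m×n. Then det(Vᵀ X V + Iₙ) = Σ_{S ⊆ [m]} (Π_{i∈S} xᵢ) · det(L_{S,S}), where X = diag(x₁,…,x_m) and L_{S,S} is the principal submatrix of L indexed by S. -/
open Matrix

namespace Matrix

variable {ι R : Type*} [Fintype ι] [DecidableEq ι] [CommRing R]

/-- Multilinearity in the rows: taking the rows of `M` on `s` and those of `1` off `s` leaves the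
principal minor of `M` on `s`. -/
theorem det_one_add_eq_sum_det_submatrix (M : Matrix ι ι R) :
    (1 + M).det = ∑ s : Finset ι, (M.submatrix (↑) (↑) : Matrix s s R).det := by
  rw [add_comm]
  change detRowAlternating ((fun i => M i) + fun i => (1 : Matrix ι ι R) i) = _
  rw [AlternatingMap.map_add_univ]
  exact Finset.sum_congr rfl fun s _ => det_piecewise_one_eq_submatrix_det M s

theorem submatrix_mul_diagonal_val (M : Matrix ι ι R) (d : ι → R) (s : Finset ι) :
    (M * diagonal d).submatrix ((↑) : s → ι) (↑) =
      M.submatrix (↑) (↑) * diagonal fun i : s => d i := by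
  ext i j
  simp [mul_diagonal]

theorem det_one_add_mul_diagonal (M : Matrix ι ι R) (d : ι → R) :
    (1 + M * diagonal d).det =
      ∑ s : Finset ι, (∏ i ∈ s, d i) * (M.submatrix (↑) (↑) : Matrix s s R).det := by
  rw [det_one_add_eq_sum_det_submatrix]
  refine Finset.sum_congr rfl fun s _ => ?_
  rw [submatrix_mul_diagonal_val, det_mul, det_diagonal, mul_comm, Finset.prod_coe_sort s d]

end Matrix

theorem det_generating_polynomial_general (m n : ℕ) (L : Matrix (Fin m) (Fin m) ℝ)
    (V : Matrix (Fin m) (Fin n) ℝ) (hL : L = V * Vᵀ)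
    (x : Fin m → ℝ) :
    (Vᵀ * Matrix.diagonal x * V + 1).det =
      ∑ S : Finset (Fin m),
        (∏ i ∈ S, x i) *
          (L.submatrix (fun i : S => (i : Fin m)) (fun i : S => (i : Fin m))).det := by
  rw [add_comm, det_one_add_mul_comm (Vᵀ * diagonal x) V, ← Matrix.mul_assoc, ← hL]
  exact det_one_add_mul_diagonal L x

/-- generating polynomial of a determinantal measure. -/
theorem det_generating_polynomial (m n : ℕ) (L : Matrix (Fin m) (Fin m) ℝ)
    (V : Matrix (Fin m) (Fin n) ℝ) (hPSD : L.PosSemidef) (hL : L = V * Vᵀ)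
    (x : Fin m → ℝ) :
    (Vᵀ * Matrix.diagonal x * V + 1).det =
      ∑ S : Finset (Fin m),
        (∏ i ∈ S, x i) *
          (L.submatrix (fun i : S => (i : Fin m)) (fun i : S => (i : Fin m))).det :=
  det_generating_polynomial_general m n L V hL x
end

section
/- Let G = (V, E) be a graph with n vertices labeled 1,…,n and m edges, and let b = m + 1 + n(n−1)/2 (any integer b > |E'| works where E' adds a complete graph). Assign to each edge e = {i,j} ∈ E the cost c_e = bⁱ + bʲ. Then for any S ⊆ E, S is a perfect matching of G if and only if c(S) = Σ_{i=1}^n bⁱ, where c(S) = Σ_{e∈S} c_e. -/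
/-- The cost of an (undirected) edge {i, j} on vertex set Fin n with base b:
c_{ij} = b^(i+1) + b^(j+1) (vertices are labeled 1,…,n). -/
def edgeCost (n b : ℕ) : Sym2 (Fin n) → ℕ :=
  Sym2.lift ⟨fun i j => b ^ ((i : ℕ) + 1) + b ^ ((j : ℕ) + 1), fun i j => by ring⟩

lemma base_inj {b : ℕ} (hb : 1 < b) : ∀ {n : ℕ} (f g : Fin n → ℕ),
    (∀ i, f i < b) → (∀ i, g i < b) →
    ∑ i, f i * b ^ (i : ℕ) = ∑ i, g i * b ^ (i : ℕ) → f = g := by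
  intro n
  induction n with
  | zero => intro f g _ _ _; funext i; exact i.elim0
  | succ n ih =>
    intro f g hf hg h
    have e1 : ∀ (f : Fin (n+1) → ℕ), ∑ i, f i * b ^ (i : ℕ) =
        f 0 + b * ∑ i : Fin n, f i.succ * b ^ (i : ℕ) := by
      intro f
      rw [Fin.sum_univ_succ, Finset.mul_sum]
      simp only [Fin.val_zero, pow_zero, mul_one, Fin.val_succ, pow_succ]
      congr 1
      apply Finset.sum_congr rfl
      intro i _; ring
    rw [e1 f, e1 g] at h
    have hb0 : 0 < b := by omega
    have h0 : f 0 = g 0 := by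
      have := congrArg (· % b) h
      simpa [Nat.add_mul_mod_self_left, Nat.mod_eq_of_lt (hf 0),
        Nat.mod_eq_of_lt (hg 0)] using this
    rw [h0] at h
    have h1 : ∑ i : Fin n, f i.succ * b ^ (i : ℕ) = ∑ i : Fin n, g i.succ * b ^ (i : ℕ) :=
      Nat.eq_of_mul_eq_mul_left hb0 (Nat.add_left_cancel h)
    have := ih (fun i => f i.succ) (fun i => g i.succ) (fun i => hf _) (fun i => hg _) h1
    funext i
    refine Fin.cases h0 (fun j => ?_) i
    exact congrFun this j

lemma base_inj' {b : ℕ} (hb : 1 < b) {n : ℕ} (f g : Fin n → ℕ)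
    (hf : ∀ i, f i < b) (hg : ∀ i, g i < b)
    (h : ∑ i, f i * b ^ ((i : ℕ) + 1) = ∑ i, g i * b ^ ((i : ℕ) + 1)) : f = g := by
  apply base_inj hb f g hf hg
  apply Nat.eq_of_mul_eq_mul_left (show 0 < b by omega)
  rw [Finset.mul_sum, Finset.mul_sum]
  calc ∑ i : Fin n, b * (f i * b ^ (i : ℕ)) = ∑ i : Fin n, f i * b ^ ((i : ℕ) + 1) := by
        apply Finset.sum_congr rfl; intro i _; ring
    _ = ∑ i : Fin n, g i * b ^ ((i : ℕ) + 1) := h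
    _ = ∑ i : Fin n, b * (g i * b ^ (i : ℕ)) := by
        apply Finset.sum_congr rfl; intro i _; ring

lemma edgeCost_eq_sum (n b : ℕ) (e : Sym2 (Fin n)) (he : ¬ e.IsDiag) :
    edgeCost n b e = ∑ v : Fin n, (if v ∈ e then b ^ ((v : ℕ) + 1) else 0) := by
  induction e with
  | _ i j =>
    have hij : i ≠ j := by simpa using he
    have : ∀ v : Fin n, (if v ∈ s(i, j) then b ^ ((v : ℕ) + 1) else 0) =
        (if v = i then b ^ ((v : ℕ) + 1) else 0) + (if v = j then b ^ ((v : ℕ) + 1) else 0) := by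
      intro v
      by_cases h1 : v = i <;> by_cases h2 : v = j <;> simp_all [Sym2.mem_iff]
    rw [Finset.sum_congr rfl (fun v _ => this v), Finset.sum_add_distrib]
    simp [edgeCost]

/-- with b = m + 1 + n(n−1)/2 and edge costs c_{ij} = bⁱ + bʲ, a set
S of edges of G is a perfect matching iff its total cost equals ∑_{i=1}^n bⁱ. -/
theorem perfectMatching_iff_cost (n b : ℕ) (hn : Even n) (G : SimpleGraph (Fin n))
    [DecidableRel G.Adj]
    (hb : b = G.edgeFinset.card + 1 + n * (n - 1) / 2)
    (S : Finset (Sym2 (Fin n))) (hS : S ⊆ G.edgeFinset) :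
    (∀ v : Fin n, (S.filter (fun e => v ∈ e)).card = 1) ↔
      ∑ e ∈ S, edgeCost n b e = ∑ i : Fin n, b ^ ((i : ℕ) + 1) := by
  have key : ∑ e ∈ S, edgeCost n b e =
      ∑ v : Fin n, (S.filter (fun e => v ∈ e)).card * b ^ ((v : ℕ) + 1) := by
    have h1 : ∀ e ∈ S, edgeCost n b e =
        ∑ v : Fin n, (if v ∈ e then b ^ ((v : ℕ) + 1) else 0) := by
      intro e he
      exact edgeCost_eq_sum n b e
        (SimpleGraph.not_isDiag_of_mem_edgeSet G (SimpleGraph.mem_edgeFinset.mp (hS he)))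
    rw [Finset.sum_congr rfl h1, Finset.sum_comm]
    apply Finset.sum_congr rfl
    intro v _
    rw [← Finset.sum_filter, Finset.sum_const, smul_eq_mul]
  rw [key]
  constructor
  · intro h
    simp [h]
  · intro h v
    rcases Nat.eq_zero_or_pos n with hn0 | hn0
    · exact absurd v.2 (by omega)
    · rcases Nat.lt_or_ge n 2 with hn2 | hn2
      · interval_cases n
        exact absurd hn (by decide)
      · have h2 : 2 * 1 ≤ n * (n - 1) := Nat.mul_le_mul hn2 (by omega)
        have hb1 : 1 < b := by omega
        have hlt : ∀ w : Fin n, (S.filter (fun e => w ∈ e)).card < b := by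
          intro w
          have := Finset.card_le_card (Finset.filter_subset (fun e => w ∈ e) S)
          have := Finset.card_le_card hS
          omega
        have h1 : ∀ w : Fin n, (1 : ℕ) < b := fun _ => hb1
        have := base_inj' hb1 (fun w : Fin n => (S.filter (fun e => w ∈ e)).card)
          (fun _ => 1) hlt h1 (by simpa using h)
        exact congrFun this v
end
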